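/- Let s ∈ {0,1}^N be a sampling pattern with support S, m = ‖s‖₀ ones, 0 < m < N, on a connected weighted graph, and suppose S^c is nonempty. Then K_S ≥ m(1 − m/N)²/R_s − γ, where K_S = min_{v∈S^c} w_S(v), γ = max_{v'∈S^c} Σ_{v ∈ S^c \ {v'}} w_S(v), w_S(v) = Σ_{u∈S} W(u,v), and R_s = (1/m) Σ_{ℓ=2}^N ŝ(ℓ)²/μ_ℓ is the redness of s. -/

import Mathlib

open Finset Matrix

/-
The quadratic form of the Laplacian at the indicator `s` of `S` is the cut weight
`∑_{v ∉ S} w_S(v)`, which is at most `K_S + γ` (split off a minimiser of `w_S` on `Sᶜ`).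
In the eigenbasis the same form is `∑_{ℓ ≥ 2} μ_ℓ ŝ(ℓ)²`, while
`∑_{ℓ ≥ 2} ŝ(ℓ)² = ‖s‖² - ŝ(1)² = m(1 - m/N)` because `u₁` is constant.
Cauchy–Schwarz with weights `μ_ℓ` and `1/μ_ℓ` gives `(m(1 - m/N))² ≤ (∑_{ℓ ≥ 2} μ_ℓ ŝ(ℓ)²) · m R_s`.
-/

theorem Finset.sum_le_inf'_add_sup'_sum_erase {ι R : Type*} [DecidableEq ι] [AddCommMonoid R]
    [LinearOrder R] [IsOrderedAddMonoid R] (t : Finset ι) (ht : t.Nonempty) (f : ι → R) :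
    ∑ v ∈ t, f v ≤ t.inf' ht f + t.sup' ht fun v' => ∑ v ∈ t.erase v', f v := by
  obtain ⟨v₀, hv₀, hmin⟩ := t.exists_mem_eq_inf' ht f
  rw [← add_sum_erase t f hv₀, hmin]
  gcongr
  exact le_sup' (fun v' => ∑ v ∈ t.erase v', f v) hv₀

theorem Finset.sq_sum_sq_div_le_sum_mul_sq {ι R : Type*} [Semifield R] [LinearOrder R]
    [IsStrictOrderedRing R] [ExistsAddOfLE R] (E : Finset ι) (a : ι → R) {μ : ι → R}
    (hμ : ∀ i ∈ E, 0 < μ i) :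
    (∑ i ∈ E, a i ^ 2) ^ 2 / ∑ i ∈ E, a i ^ 2 / μ i ≤ ∑ i ∈ E, μ i * a i ^ 2 := by
  have hdiv : ∀ i ∈ E, 0 ≤ a i ^ 2 / μ i := fun i hi =>
    div_nonneg (sq_nonneg _) (hμ i hi).le
  have hmul : ∀ i ∈ E, 0 ≤ μ i * a i ^ 2 := fun i hi =>
    mul_nonneg (hμ i hi).le (sq_nonneg _)
  refine div_le_of_le_mul₀ (sum_nonneg hdiv) (sum_nonneg hmul) ?_
  refine sum_sq_le_sum_mul_sum_of_sq_le_mul E hmul hdiv fun i hi => le_of_eq ?_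
  field_simp [(hμ i hi).ne']

namespace Matrix

variable {n R : Type*} [Fintype n] [DecidableEq n]

theorem mul_eq_mul_diagonal_of_mulVec_col [CommSemiring R] {L U : Matrix n n R} {μ : n → R}
    (h : ∀ ℓ, L *ᵥ (fun i => U i ℓ) = μ ℓ • fun i => U i ℓ) :
    L * U = U * diagonal μ := by
  ext i ℓ
  rw [mul_diagonal, mul_apply, mul_comm]
  exact congrFun (h ℓ) i

theorem sum_transpose_mulVec_sq [CommRing R] {U : Matrix n n R} (hU : Uᵀ * U = 1)
    (x : n → R) : ∑ ℓ, (Uᵀ *ᵥ x) ℓ ^ 2 = x ⬝ᵥ x := by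
  simp only [sq]
  change (Uᵀ *ᵥ x) ⬝ᵥ (Uᵀ *ᵥ x) = x ⬝ᵥ x
  nth_rewrite 1 [mulVec_transpose]
  rw [← dotProduct_mulVec, mulVec_mulVec, mul_eq_one_comm.mp hU, one_mulVec]

theorem dotProduct_mulVec_eq_sum_mul_transpose_mulVec_sq [CommRing R] {L U : Matrix n n R}
    {μ : n → R} (hU : Uᵀ * U = 1) (hLU : L * U = U * diagonal μ) (x : n → R) :
    x ⬝ᵥ L *ᵥ x = ∑ ℓ, μ ℓ * (Uᵀ *ᵥ x) ℓ ^ 2 := by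
  have hL : L = U * diagonal μ * Uᵀ := by
    rw [← hLU, Matrix.mul_assoc, mul_eq_one_comm.mp hU, Matrix.mul_one]
  rw [hL, ← mulVec_mulVec, ← mulVec_mulVec, dotProduct_mulVec, ← mulVec_transpose]
  simp only [dotProduct, mulVec_diagonal]
  exact sum_congr rfl fun ℓ _ => by ring

theorem transpose_mulVec_indicator_apply [CommSemiring R] (U : Matrix n n R) (S : Finset n)
    (ℓ : n) : (Uᵀ *ᵥ fun v => if v ∈ S then 1 else 0) ℓ = ∑ i ∈ S, U i ℓ := by
  simp [mulVec, dotProduct, sum_ite_mem]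

theorem indicator_dotProduct_self [CommSemiring R] (S : Finset n) :
    ((fun v => if v ∈ S then 1 else 0) ⬝ᵥ fun v => if v ∈ S then 1 else 0) = (#S : R) := by
  simp [dotProduct, sum_ite_mem]

theorem indicator_dotProduct_mulVec_indicator [CommSemiring R] (A : Matrix n n R)
    (S : Finset n) :
    ((fun v => if v ∈ S then 1 else 0) ⬝ᵥ A *ᵥ fun v => if v ∈ S then 1 else 0) =
      ∑ u ∈ S, ∑ v ∈ S, A u v := by
  simp [dotProduct, mulVec, sum_ite_mem]

theorem indicator_dotProduct_laplacian_mulVec_indicator [CommRing R] (W : Matrix n n R)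
    (S : Finset n) :
    ((fun v => if v ∈ S then 1 else 0) ⬝ᵥ
        (diagonal (fun u => ∑ v, W u v) - W) *ᵥ fun v => if v ∈ S then 1 else 0) =
      ∑ v ∈ Sᶜ, ∑ u ∈ S, W u v := by
  rw [indicator_dotProduct_mulVec_indicator, sum_comm]
  refine sum_congr rfl fun u hu => ?_
  simp only [sub_apply, sum_sub_distrib, diagonal_apply, sum_ite_eq, if_pos hu]
  rw [← sum_add_sum_compl S (W u), add_sub_cancel_left]

end Matrix

/-- Blue-noise bound on `K_S`: for a binary sampling pattern `s` with support `S`,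
`m` ones and nonempty complement, `K_S ≥ m(1-m/N)²/R_s - γ`, where
`K_S = min_{v∈Sᶜ} w_S(v)`, `γ = max_{v'∈Sᶜ} ∑_{v∈Sᶜ\{v'}} w_S(v)`,
`w_S(v) = ∑_{u∈S} W(u,v)`, and `R_s = (1/m) ∑_{ℓ≥2} ŝ(ℓ)²/μ_ℓ`. -/
theorem stmt_10 {N : ℕ} (hN : 2 ≤ N)
    (W : Matrix (Fin N) (Fin N) ℝ)
    (L : Matrix (Fin N) (Fin N) ℝ)
    (hL : L = Matrix.diagonal (fun u => ∑ v, W u v) - W)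
    (μ : Fin N → ℝ) (U : Matrix (Fin N) (Fin N) ℝ)
    (hU : Uᵀ * U = 1)
    (hμmono : Monotone μ)
    (hμ0 : μ (⟨0, by omega⟩ : Fin N) = 0)
    (hμ2 : 0 < μ (⟨1, by omega⟩ : Fin N))
    (hU0 : ∀ i, U i (⟨0, by omega⟩ : Fin N) = 1 / Real.sqrt N)
    (heig : ∀ ℓ, L.mulVec (fun i => U i ℓ) = μ ℓ • (fun i => U i ℓ))
    (S : Finset (Fin N)) (s : Fin N → ℝ)
    (hs : ∀ v, s v = if v ∈ S then 1 else 0)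
    (m : ℕ) (hm : m = S.card)
    (hSc : Sᶜ.Nonempty) :
    Sᶜ.inf' hSc (fun v => ∑ u ∈ S, W u v) ≥
      (m : ℝ) * (1 - (m : ℝ) / N) ^ 2 /
        ((1 / (m : ℝ)) *
          ∑ ℓ ∈ Finset.univ.erase (⟨0, by omega⟩ : Fin N), ((Uᵀ.mulVec s) ℓ) ^ 2 / μ ℓ) -
      Sᶜ.sup' hSc (fun v' => ∑ v ∈ Sᶜ.erase v', ∑ u ∈ S, W u v) := by
  replace hs : s = fun v => if v ∈ S then 1 else 0 := funext hs
  set ℓ₀ : Fin N := ⟨0, by omega⟩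
  have hμpos : ∀ ℓ ∈ univ.erase ℓ₀, 0 < μ ℓ := fun ℓ hℓ =>
    hμ2.trans_le <| hμmono <| Fin.le_def.mpr <| Nat.one_le_iff_ne_zero.mpr <|
      Fin.val_ne_iff.mpr (ne_of_mem_erase hℓ)
  have hcut : ∑ ℓ ∈ univ.erase ℓ₀, μ ℓ * (Uᵀ *ᵥ s) ℓ ^ 2 = ∑ v ∈ Sᶜ, ∑ u ∈ S, W u v := by
    have hLU := mul_eq_mul_diagonal_of_mulVec_col heig
    rw [← indicator_dotProduct_laplacian_mulVec_indicator, ← hL, ← hs,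
      dotProduct_mulVec_eq_sum_mul_transpose_mulVec_sq hU hLU,
      ← add_sum_erase _ _ (mem_univ ℓ₀), hμ0, zero_mul, zero_add]
  have hmass : ∑ ℓ ∈ univ.erase ℓ₀, (Uᵀ *ᵥ s) ℓ ^ 2 = m * (1 - m / N) := by
    have hŝ₀ : (Uᵀ *ᵥ s) ℓ₀ ^ 2 = m ^ 2 / N := by
      rw [hs, transpose_mulVec_indicator_apply, sum_congr rfl fun i _ => hU0 i, sum_const,
        ← hm, nsmul_eq_mul, mul_one_div, div_pow, Real.sq_sqrt N.cast_nonneg]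
    have htotal : ∑ ℓ, (Uᵀ *ᵥ s) ℓ ^ 2 = m := by
      rw [sum_transpose_mulVec_sq hU, hs, indicator_dotProduct_self, hm]
    rw [← add_sum_erase _ _ (mem_univ ℓ₀), hŝ₀] at htotal
    linear_combination htotal
  have hCS := (univ.erase ℓ₀).sq_sum_sq_div_le_sum_mul_sq (Uᵀ *ᵥ s) hμpos
  rw [hcut, hmass] at hCS
  have hsplit := Sᶜ.sum_le_inf'_add_sup'_sum_erase hSc fun v => ∑ u ∈ S, W u v
  rw [one_div_mul_eq_div, div_div_eq_mul_div,
    show (m : ℝ) * (1 - m / N) ^ 2 * m = (m * (1 - m / N)) ^ 2 by ring]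
  linarith
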